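/- The regularized logistic regression objective ℓ(w) = (1/N) Σ_{i=1}^N log(1 + exp(-y_i w^T x_i)) + (γ/2)‖w‖₂², with γ > 0, y_i ∈ {-1,1}, and ‖x_i‖₂ ≤ B for all i, is self-concordant with parameter B/√γ. -/

import Mathlib

/-!
Writing `aᵢ = -yᵢ xᵢ` (so `‖aᵢ‖ ≤ B`), the objective is `c ∑ φ ⟪v, aᵢ⟫ + (γ/2)‖v‖²` with
`φ = softplus` and `c = 1/N`. Along a direction `u` its third derivative is `c ∑ ⟪u, aᵢ⟫³ φ'''`
and its second is `P + γ‖u‖²` with `P = c ∑ ⟪u, aᵢ⟫² φ''`. With `σ` the sigmoid, `φ'' = σ(1 - σ)` and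
`φ''' = σ(1 - σ)(1 - 2σ)`, so `|φ'''| ≤ φ''` and the third derivative is at most `B‖u‖ P`. The
quadratic term gives `√γ ‖u‖ ≤ √(P + γ‖u‖²)`, hence `B‖u‖ P ≤ (B/√γ)(P + γ‖u‖²)^{3/2}`.
-/

open scoped RealInnerProductSpace
open Real

noncomputable def softplus (s : ℝ) : ℝ := log (1 + exp s)

theorem contDiff_softplus {n : WithTop ℕ∞} : ContDiff ℝ n softplus :=
  (contDiff_const.add contDiff_exp).log fun s => by positivity

theorem hasDerivAt_softplus (s : ℝ) : HasDerivAt softplus (sigmoid s) s := by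
  refine (((hasDerivAt_exp s).const_add 1).log (by positivity)).congr_deriv ?_
  rw [sigmoid_def, exp_neg]
  field_simp
  ring

theorem deriv_softplus : deriv softplus = sigmoid :=
  funext fun s => (hasDerivAt_softplus s).deriv

theorem iteratedDeriv_two_softplus (s : ℝ) :
    iteratedDeriv 2 softplus s = sigmoid s * (1 - sigmoid s) := by
  rw [iteratedDeriv_succ', iteratedDeriv_one, deriv_softplus, deriv_sigmoid]

theorem iteratedDeriv_three_softplus (s : ℝ) :
    iteratedDeriv 3 softplus s = sigmoid s * (1 - sigmoid s) * (1 - 2 * sigmoid s) := by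
  have h := (hasDerivAt_sigmoid s).fun_mul ((hasDerivAt_sigmoid s).const_sub 1)
  rw [iteratedDeriv_succ', iteratedDeriv_succ', iteratedDeriv_one, deriv_softplus, deriv_sigmoid,
    h.deriv]
  ring

theorem abs_iteratedDeriv_three_softplus_le (s : ℝ) :
    |iteratedDeriv 3 softplus s| ≤ iteratedDeriv 2 softplus s := by
  have h0 := sigmoid_nonneg s
  have h1 := sigmoid_le_one s
  rw [iteratedDeriv_three_softplus, iteratedDeriv_two_softplus, abs_mul,
    abs_of_nonneg (mul_nonneg h0 (sub_nonneg.2 h1))]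
  exact mul_le_of_le_one_right (mul_nonneg h0 (sub_nonneg.2 h1))
    (abs_le.2 ⟨by linarith, by linarith⟩)

section NormedSpace

variable {E : Type*} [NormedAddCommGroup E] [NormedSpace ℝ E]

theorem iteratedFDeriv_comp_continuousLinearMap_apply_const {f : ℝ → ℝ} {n : ℕ}
    (hf : ContDiff ℝ n f) (L : E →L[ℝ] ℝ) (w u : E) :
    iteratedFDeriv ℝ n (fun v => f (L v)) w (fun _ => u) = L u ^ n * iteratedDeriv n f (L w) := by
  rw [show (fun v => f (L v)) = f ∘ L from rfl, L.iteratedFDeriv_comp_right hf w le_rfl,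
    ContinuousMultilinearMap.compContinuousLinearMap_apply,
    iteratedFDeriv_apply_eq_iteratedDeriv_mul_prod]
  simp

def IsSelfConcordant (M : ℝ) (f : E → ℝ) : Prop :=
  ∀ w u : E, |iteratedFDeriv ℝ 3 f w (fun _ => u)| ≤
    M * iteratedFDeriv ℝ 2 f w (fun _ => u) ^ ((3 : ℝ) / 2)

end NormedSpace

theorem abs_le_div_sqrt_mul_add_sq_rpow {T P B γ r : ℝ} (hB : 0 ≤ B) (hγ : 0 < γ) (hP : 0 ≤ P)
    (hr : 0 ≤ r) (hT : |T| ≤ B * r * P) :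
    |T| ≤ B / √γ * (P + γ * r ^ 2) ^ ((3 : ℝ) / 2) := by
  have hsq : √(γ * r ^ 2) = √γ * r := by rw [sqrt_mul hγ.le, sqrt_sq hr]
  have hpow : (P + γ * r ^ 2) ^ ((3 : ℝ) / 2) = √(P + γ * r ^ 2) * (P + γ * r ^ 2) := by
    rw [show (3 : ℝ) / 2 = 1 / 2 + 1 by norm_num, rpow_add' (by positivity) (by norm_num),
      rpow_one, sqrt_eq_rpow]
  calc |T| ≤ B * r * P := hT
    _ = B / √γ * (√(γ * r ^ 2) * P) := by
        rw [hsq]; field_simp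
    _ ≤ B / √γ * (√(P + γ * r ^ 2) * (P + γ * r ^ 2)) := by
        gcongr <;> linarith [mul_nonneg hγ.le (sq_nonneg r)]
    _ = B / √γ * (P + γ * r ^ 2) ^ ((3 : ℝ) / 2) := by rw [hpow]

theorem abs_mul_sum_pow_three_mul_le {ι : Type*} (s : Finset ι) {c K : ℝ} {t p q : ι → ℝ}
    (hc : 0 ≤ c) (ht : ∀ i ∈ s, |t i| ≤ K) (hq : ∀ i ∈ s, |q i| ≤ p i) :
    |c * ∑ i ∈ s, t i ^ 3 * q i| ≤ K * (c * ∑ i ∈ s, t i ^ 2 * p i) := by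
  have hterm : ∀ i ∈ s, |t i ^ 3 * q i| ≤ K * (t i ^ 2 * p i) := fun i hi => by
    have hsplit : |t i ^ 3 * q i| = |t i| * (t i ^ 2 * |q i|) := by
      rw [abs_mul, abs_pow, show |t i| ^ 3 = |t i| * |t i| ^ 2 by ring, sq_abs, mul_assoc]
    rw [hsplit]
    have hK : 0 ≤ K := (abs_nonneg _).trans (ht i hi)
    gcongr
    exacts [ht i hi, hq i hi]
  calc |c * ∑ i ∈ s, t i ^ 3 * q i| ≤ c * ∑ i ∈ s, |t i ^ 3 * q i| := by
        rw [abs_mul, abs_of_nonneg hc]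
        gcongr
        exact Finset.abs_sum_le_sum_abs _ _
    _ ≤ c * ∑ i ∈ s, K * (t i ^ 2 * p i) := by gcongr with i hi; exact hterm i hi
    _ = K * (c * ∑ i ∈ s, t i ^ 2 * p i) := by rw [← Finset.mul_sum]; ring

section InnerProductSpace

variable {E : Type*} [NormedAddCommGroup E] [InnerProductSpace ℝ E]

theorem fderiv_fderiv_norm_sq :
    fderiv ℝ (fderiv ℝ fun x : E => ‖x‖ ^ 2) = fun _ => 2 • innerSL ℝ := by
  rw [fderiv_norm_sq, ← FunLike.coe_smul]
  exact funext fun _ => ContinuousLinearMap.fderiv _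

theorem iteratedFDeriv_two_norm_sq_apply (w : E) (m : Fin 2 → E) :
    iteratedFDeriv ℝ 2 (fun x : E => ‖x‖ ^ 2) w m = 2 * ⟪m 0, m 1⟫ := by
  rw [iteratedFDeriv_two_apply, fderiv_fderiv_norm_sq, smul_apply, smul_apply,
    innerSL_apply_apply, nsmul_eq_mul, Nat.cast_ofNat]

theorem iteratedFDeriv_three_norm_sq (w : E) :
    iteratedFDeriv ℝ 3 (fun x : E => ‖x‖ ^ 2) w = 0 := by
  ext m
  rw [iteratedFDeriv_succ_apply_right, iteratedFDeriv_two_apply, fderiv_fderiv_norm_sq]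
  simp

variable {ι : Type*} [Fintype ι]

theorem iteratedFDeriv_ridgeSum_add_norm_sq_apply_const {φ : ℝ → ℝ} {n : ℕ} (hφ : ContDiff ℝ n φ)
    (a : ι → E) (c γ : ℝ) (w u : E) :
    iteratedFDeriv ℝ n (fun v => c * ∑ i, φ ⟪v, a i⟫ + γ / 2 * ‖v‖ ^ 2) w (fun _ => u) =
      c * ∑ i, ⟪u, a i⟫ ^ n * iteratedDeriv n φ ⟪w, a i⟫
        + γ / 2 * iteratedFDeriv ℝ n (fun v : E => ‖v‖ ^ 2) w (fun _ => u) := by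
  have hridge : ∀ i, ContDiff ℝ n fun v => φ ⟪v, a i⟫ := fun i =>
    hφ.comp (contDiff_id.inner ℝ contDiff_const)
  have hsq : ContDiff ℝ n fun v : E => ‖v‖ ^ 2 := contDiff_norm_sq ℝ
  have hsum : ContDiff ℝ n fun v => ∑ i, φ ⟪v, a i⟫ := ContDiff.sum fun i _ => hridge i
  simp only [← smul_eq_mul (a := c), ← smul_eq_mul (a := γ / 2)]
  rw [fun_iteratedFDeriv_add_apply (hsum.const_smul c).contDiffAt (hsq.const_smul _).contDiffAt,
    add_apply, iteratedFDeriv_const_smul_apply' hsum.contDiffAt,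
    iteratedFDeriv_const_smul_apply' hsq.contDiffAt,
    iteratedFDeriv_fun_sum_apply fun i _ => (hridge i).contDiffAt]
  simp only [smul_apply, sum_apply]
  congr 2
  refine Finset.sum_congr rfl fun i _ => ?_
  exact iteratedFDeriv_comp_continuousLinearMap_apply_const hφ ((innerSL ℝ).flip (a i)) w u

theorem isSelfConcordant_ridgeSum_add_norm_sq {φ : ℝ → ℝ} (hφ : ContDiff ℝ 3 φ)
    (hφ3 : ∀ s, |iteratedDeriv 3 φ s| ≤ iteratedDeriv 2 φ s) {a : ι → E} {B c γ : ℝ}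
    (hB : 0 ≤ B) (ha : ∀ i, ‖a i‖ ≤ B) (hc : 0 ≤ c) (hγ : 0 < γ) :
    IsSelfConcordant (B / √γ) fun v => c * ∑ i, φ ⟪v, a i⟫ + γ / 2 * ‖v‖ ^ 2 := by
  intro w u
  rw [iteratedFDeriv_ridgeSum_add_norm_sq_apply_const hφ, iteratedFDeriv_three_norm_sq,
    iteratedFDeriv_ridgeSum_add_norm_sq_apply_const (hφ.of_le (by norm_num)),
    iteratedFDeriv_two_norm_sq_apply, real_inner_self_eq_norm_sq, zero_apply, mul_zero, add_zero,
    show γ / 2 * (2 * ‖u‖ ^ 2) = γ * ‖u‖ ^ 2 by ring]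
  have hφ2 : ∀ s, 0 ≤ iteratedDeriv 2 φ s := fun s => (abs_nonneg _).trans (hφ3 s)
  have hu : ∀ i, |⟪u, a i⟫| ≤ B * ‖u‖ := fun i =>
    (abs_real_inner_le_norm u (a i)).trans (by rw [mul_comm]; gcongr; exact ha i)
  refine abs_le_div_sqrt_mul_add_sq_rpow hB hγ ?_ (norm_nonneg u) ?_
  · exact mul_nonneg hc (Finset.sum_nonneg fun i _ => mul_nonneg (sq_nonneg _) (hφ2 _))
  · exact abs_mul_sum_pow_three_mul_le _ hc (fun i _ => hu i) (fun i _ => hφ3 _)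

end InnerProductSpace

/-- The regularized logistic regression objective
`ℓ(w) = (1/N) Σ log(1 + exp(-y_i ⟨w, x_i⟩)) + (γ/2)‖w‖²`, with `γ > 0`,
`y_i ∈ {±1}` and `‖x_i‖ ≤ B`, is self-concordant with parameter `B/√γ`. -/
theorem logistic_regression_self_concordant {d N : ℕ} (hN : 0 < N)
    (x : Fin N → EuclideanSpace ℝ (Fin d)) (y : Fin N → ℝ) (B γ : ℝ)
    (hy : ∀ i, y i = 1 ∨ y i = -1) (hB : ∀ i, ‖x i‖ ≤ B) (hγ : 0 < γ) :
    ∀ w u : EuclideanSpace ℝ (Fin d),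
      |iteratedFDeriv ℝ 3
          (fun v => (1 / (N:ℝ)) * ∑ i, Real.log (1 + Real.exp (-(y i * ⟪v, x i⟫)))
            + (γ / 2) * ‖v‖ ^ 2) w (fun _ => u)|
        ≤ (B / Real.sqrt γ) *
          (iteratedFDeriv ℝ 2
            (fun v => (1 / (N:ℝ)) * ∑ i, Real.log (1 + Real.exp (-(y i * ⟪v, x i⟫)))
              + (γ / 2) * ‖v‖ ^ 2) w (fun _ => u)) ^ ((3:ℝ)/2) := by
  have hB0 : 0 ≤ B := (norm_nonneg _).trans (hB ⟨0, hN⟩)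
  have ha : ∀ i, ‖-y i • x i‖ ≤ B := fun i => by
    rcases hy i with h | h <;> simpa [h] using hB i
  have hobj : (fun v : EuclideanSpace ℝ (Fin d) =>
      (1 / (N:ℝ)) * ∑ i, Real.log (1 + Real.exp (-(y i * ⟪v, x i⟫))) + (γ / 2) * ‖v‖ ^ 2) =
      fun v => 1 / (N:ℝ) * ∑ i, softplus ⟪v, -y i • x i⟫ + γ / 2 * ‖v‖ ^ 2 := by
    funext v
    simp [softplus, inner_smul_right]
  rw [hobj]
  exact isSelfConcordant_ridgeSum_add_norm_sq contDiff_softplus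
    abs_iteratedDeriv_three_softplus_le hB0 ha (by positivity) hγ
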